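/- Let EF be a contracting, c-bounded evolution frame with finite event class EC, let S be a successor-closed set of knowledge states with finitely many distinct initial knowledge bases, and suppose every compilation comp_EF(s) for s ∈ S contains only rules from a fixed finite set R_0. Then canonical equivalence ≡^can_EF has finite index with respect to S. -/

import Mathlib

structure KState (Rule Event : Type) : Type where
  kb : Set Rule
  events : List Event

/-- Append a sequence of events to a knowledge state. -/
def KState.append {Rule Event : Type} (s : KState Rule Event) (es : List Event) :
    KState Rule Event := ⟨s.kb, s.events ++ es⟩

/-- All events of the list belong to the event class `EC`. -/
def InEC {Event : Type} (EC : Set Event) (es : List Event) : Prop := ∀ E ∈ es, E ∈ EC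

/-- Strong equivalence of knowledge states with respect to belief operator `B`. -/
def StrongEquiv {Rule Event : Type} (B : KState Rule Event → Set Rule) (EC : Set Event)
    (s s' : KState Rule Event) : Prop :=
  ∀ es : List Event, InEC EC es → B (s.append es) = B (s'.append es)

/-- k-equivalence of knowledge states. -/
def KEquiv {Rule Event : Type} (B : KState Rule Event → Set Rule) (EC : Set Event) (k : ℕ)
    (s s' : KState Rule Event) : Prop :=
  ∀ es : List Event, InEC EC es → es.length ≤ k → B (s.append es) = B (s'.append es)

/-- The equivalence class of `s` within `S` under the relation `R`. -/
def cls {α : Type} (R : α → α → Prop) (S : Set α) (s : α) : Set α := {t ∈ S | R s t}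

/-- The relation `R` has finite index with respect to `S`:
    it partitions `S` into finitely many classes. -/
def FiniteIndex {α : Type} (R : α → α → Prop) (S : Set α) : Prop :=
  (cls R S '' S).Finite

/-- `S` is closed under taking successor knowledge states (one per event of `EC`). -/
def SuccClosed {Rule Event : Type} (EC : Set Event) (S : Set (KState Rule Event)) : Prop :=
  ∀ s ∈ S, ∀ E ∈ EC, s.append [E] ∈ S

/-- One reduction step on an update sequence (a list of finite programs): either
    remove a rule from a component that also occurs in a later component, or remove
    an empty component program. -/
inductive RedStep {Rule : Type} [DecidableEq Rule] :
    List (Finset Rule) → List (Finset Rule) → Prop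
  | dup (Ps : List (Finset Rule)) (i j : ℕ) (r : Rule) (hij : i < j) (hj : j < Ps.length)
      (hri : r ∈ Ps.getD i ∅) (hrj : r ∈ Ps.getD j ∅) :
      RedStep Ps (Ps.set i ((Ps.getD i ∅).erase r))
  | empty (Ps : List (Finset Rule)) (i : ℕ) (hi : i < Ps.length) (he : Ps.getD i ∅ = ∅) :
      RedStep Ps (Ps.eraseIdx i)

/-- An update sequence is irreducible (canonical) if no reduction step applies. -/
def IrreducibleSeq {Rule : Type} [DecidableEq Rule] (Ps : List (Finset Rule)) : Prop :=
  ∀ Qs, ¬ RedStep Ps Qs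

/-- `Bel` is a contracting belief operator: (i) deleting an empty component program
    leaves the belief set unchanged, and (ii) deleting a rule from a component that
    also occurs in a later component leaves the belief set unchanged. -/
def Contracting {Rule : Type} [DecidableEq Rule]
    (Bel : List (Finset Rule) → Set Rule) : Prop :=
  (∀ P P' : List (Finset Rule), Bel (P ++ [∅] ++ P') = Bel (P ++ P')) ∧
  (∀ (Ps : List (Finset Rule)) (i j : ℕ) (r : Rule), i < j → j < Ps.length →
      r ∈ Ps.getD i ∅ → r ∈ Ps.getD j ∅ →
      Bel (Ps.set i ((Ps.getD i ∅).erase r)) = Bel Ps)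

open Classical in
/-- The compilation determined by the update policy `Pi` and the realization
    assignment `rho`: the initial knowledge base is compiled by `rho` with no actions,
    and a state with last event `E` is compiled by applying `rho` to the actions that
    `Pi` selects at the predecessor state for `E`. -/
noncomputable def compOf {Rule Event Action : Type}
    (Pi : KState Rule Event → Event → Set Action)
    (rho : KState Rule Event → Set Action → List (Finset Rule))
    (s : KState Rule Event) : List (Finset Rule) :=
  if h : s.events = [] then rho s ∅
  else rho ⟨s.kb, s.events.dropLast⟩ (Pi ⟨s.kb, s.events.dropLast⟩ (s.events.getLast h))

/-- The last `min (|s|, c)` events of the knowledge state `s`. -/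
def lastEvents {Rule Event : Type} (c : ℕ) (s : KState Rule Event) : List Event :=
  s.events.drop (s.events.length - c)

/-- The evolution frame is `c`-bounded: the update policy and the realization
    assignment at `s` depend only on the belief set of `s` and the last
    `min (|s|, c)` events of `s`. -/
def CBounded {Rule Event Action : Type} (c : ℕ)
    (Pi : KState Rule Event → Event → Set Action)
    (rho : KState Rule Event → Set Action → List (Finset Rule))
    (BelS : KState Rule Event → Set Rule) : Prop :=
  ∃ (f : Set Rule → List Event → Event → Set Action)
    (g : Set Rule → List Event → Set Action → List (Finset Rule)),
    (∀ s E, Pi s E = f (BelS s) (lastEvents c s) E) ∧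
    (∀ s A, rho s A = g (BelS s) (lastEvents c s) A)

/-!
A canonical update sequence has nonempty components, and no rule occurs in two of them; over the
finite rule set `R0` it therefore has at most `|R0|` components, so a contracting belief operator,
which does not see the passage to canonical form, takes only finitely many values on `S`.
By `c`-boundedness the next compilation is a function of the current belief set, the last `c`
events and the new event. Hence two states with equal beliefs along all futures of length at
most `c` have equal beliefs along every future: after the first `c` events of a longer future
both states also share their last `c` events. As `EC` is finite, there are only finitely many
tables of beliefs along futures of length at most `c`.
-/

open Relation

theorem List.finite_setOf_forall_mem_length_le {α : Type*} {A : Set α} (hA : A.Finite) (n : ℕ) :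
    {l : List α | (∀ x ∈ l, x ∈ A) ∧ l.length ≤ n}.Finite := by
  have := hA.to_subtype
  refine ((List.finite_length_le A n).image (List.map Subtype.val)).subset ?_
  rintro l ⟨hmem, hlen⟩
  exact ⟨l.pmap Subtype.mk hmem, by simpa using hlen, by simp [List.map_pmap]⟩

theorem finiteIndex_of_finite_image {α β : Type} {R : α → α → Prop} {S : Set α}
    (Φ : α → β) (hΦ : (Φ '' S).Finite) (hR : ∀ s t, R s t ↔ Φ s = Φ t) :
    FiniteIndex R S := by
  refine (hΦ.image fun b => {t ∈ S | b = Φ t}).subset ?_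
  rintro _ ⟨s, hs, rfl⟩
  exact ⟨Φ s, ⟨s, hs, rfl⟩, by simp only [cls, hR]⟩

theorem FiniteIndex.of_le {α : Type} {R R' : α → α → Prop} {S : Set α}
    (h : FiniteIndex R S) (hR : ∀ s, R s s) (hR' : Equivalence R')
    (hle : ∀ s t, R s t → R' s t) : FiniteIndex R' S := by
  refine (h.image fun C => ⋃ t ∈ C, cls R' S t).subset ?_
  rintro _ ⟨s, hs, rfl⟩
  refine ⟨cls R S s, ⟨s, hs, rfl⟩, Set.Subset.antisymm ?_ ?_⟩
  · intro u hu
    simp only [Set.mem_iUnion] at hu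
    obtain ⟨t, ⟨-, hst⟩, hu, htu⟩ := hu
    exact ⟨hu, hR'.trans (hle s t hst) htu⟩
  · intro u hu
    exact Set.mem_biUnion ⟨hs, hR s⟩ hu

section Reduction

variable {Rule : Type} [DecidableEq Rule]

theorem RedStep.bel_eq {Bel : List (Finset Rule) → Set Rule} (hc : Contracting Bel)
    {Ps Qs : List (Finset Rule)} (h : RedStep Ps Qs) : Bel Qs = Bel Ps := by
  cases h with
  | dup i j r hij hj hri hrj => exact hc.2 _ i j r hij hj hri hrj
  | empty i hi he =>
    have hPs : Ps = Ps.take i ++ [∅] ++ Ps.drop (i + 1) := by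
      rw [List.getD_eq_getElem _ _ hi] at he
      conv_lhs => rw [← List.take_append_drop i Ps, List.drop_eq_getElem_cons hi, he]
      simp
    rw [List.eraseIdx_eq_take_drop_succ, ← hc.1, ← hPs]

theorem Contracting.bel_eq_of_reflTransGen {Bel : List (Finset Rule) → Set Rule}
    (hc : Contracting Bel) {Ps Qs : List (Finset Rule)} (h : ReflTransGen RedStep Ps Qs) :
    Bel Qs = Bel Ps := by
  induction h with
  | refl => rfl
  | tail _ hstep ih => exact (hstep.bel_eq hc).trans ih

theorem RedStep.forall_subset {Ps Qs : List (Finset Rule)} {R0 : Finset Rule}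
    (h : RedStep Ps Qs) (hPs : ∀ P ∈ Ps, P ⊆ R0) : ∀ Q ∈ Qs, Q ⊆ R0 := by
  cases h with
  | dup i j r hij hj =>
    intro Q hQ
    rcases List.mem_or_eq_of_mem_set hQ with hQ | rfl
    · exact hPs Q hQ
    · rw [List.getD_eq_getElem _ _ (hij.trans hj)]
      exact (Finset.erase_subset _ _).trans (hPs _ (List.getElem_mem _))
  | empty i => exact fun Q hQ => hPs Q (List.mem_of_mem_eraseIdx hQ)

theorem Relation.ReflTransGen.forall_subset {Ps Qs : List (Finset Rule)} {R0 : Finset Rule}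
    (h : ReflTransGen RedStep Ps Qs) (hPs : ∀ P ∈ Ps, P ⊆ R0) : ∀ Q ∈ Qs, Q ⊆ R0 := by
  induction h with
  | refl => exact hPs
  | tail _ hstep ih => exact hstep.forall_subset ih

theorem IrreducibleSeq.length_le_card {Ps : List (Finset Rule)} {R0 : Finset Rule}
    (hirr : IrreducibleSeq Ps) (hPs : ∀ P ∈ Ps, P ⊆ R0) : Ps.length ≤ R0.card := by
  have hne : ∀ i : Fin Ps.length, (Ps.getD i ∅).Nonempty := fun i =>
    Finset.nonempty_iff_ne_empty.2 fun he => hirr _ (RedStep.empty Ps i i.2 he)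
  choose x hx using hne
  have hxR0 : ∀ i, x i ∈ R0 := fun i => by
    have hi := hx i
    rw [List.getD_eq_getElem _ _ i.2] at hi
    exact hPs _ (List.getElem_mem _) hi
  -- a rule shared by two components could be deleted from the earlier one
  have hinj : Function.Injective x := by
    intro i j hij
    by_contra hne
    rcases lt_or_gt_of_ne (Fin.val_ne_of_ne hne) with h | h
    · exact hirr _ (RedStep.dup Ps i j (x i) h j.2 (hx i) (hij ▸ hx j))
    · exact hirr _ (RedStep.dup Ps j i (x j) h i.2 (hx j) (hij ▸ hx i))
  simpa using Finset.card_le_card_of_injOn (s := Finset.univ) x (fun i _ => hxR0 i) hinj.injOn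

theorem Contracting.finite_image_bel {Bel : List (Finset Rule) → Set Rule}
    (hc : Contracting Bel) (canon : List (Finset Rule) → List (Finset Rule))
    (hcanon : ∀ Ps, ReflTransGen RedStep Ps (canon Ps) ∧ IrreducibleSeq (canon Ps))
    (R0 : Finset Rule) : (Bel '' {Ps | ∀ P ∈ Ps, P ⊆ R0}).Finite := by
  refine ((List.finite_setOf_forall_mem_length_le (Set.finite_Iic R0) R0.card).image Bel).subset ?_
  rintro _ ⟨Ps, hPs, rfl⟩
  have hsub := (hcanon Ps).1.forall_subset hPs
  exact ⟨canon Ps, ⟨hsub, (hcanon Ps).2.length_le_card hsub⟩,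
    hc.bel_eq_of_reflTransGen (hcanon Ps).1⟩

end Reduction

section Frame

variable {Rule Event Action : Type}

theorem KState.append_nil (s : KState Rule Event) : s.append [] = s := by
  simp [KState.append]

theorem KState.append_append (s : KState Rule Event) (a b : List Event) :
    s.append (a ++ b) = (s.append a).append b := by
  simp [KState.append]

theorem KState.append_cons (s : KState Rule Event) (E : Event) (es : List Event) :
    s.append (E :: es) = (s.append [E]).append es :=
  s.append_append [E] es

theorem SuccClosed.append_mem {EC : Set Event} {S : Set (KState Rule Event)}
    (hS : SuccClosed EC S) {s : KState Rule Event} (hs : s ∈ S) {es : List Event}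
    (hes : InEC EC es) : s.append es ∈ S := by
  induction es generalizing s with
  | nil => simpa [KState.append_nil] using hs
  | cons E es ih =>
    rw [KState.append_cons]
    exact ih (hS s hs E (hes E List.mem_cons_self)) fun x hx => hes x (List.mem_cons_of_mem _ hx)

theorem StrongEquiv.equivalence (B : KState Rule Event → Set Rule) (EC : Set Event) :
    Equivalence (StrongEquiv B EC) where
  refl _ _ _ := rfl
  symm h es hes := (h es hes).symm
  trans h h' es hes := (h es hes).trans (h' es hes)

theorem finiteIndex_kEquiv {B : KState Rule Event → Set Rule} {EC : Set Event}
    {S : Set (KState Rule Event)} {V : Set (Set Rule)} (hEC : EC.Finite) (hS : SuccClosed EC S)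
    (hV : V.Finite) (hBV : ∀ s ∈ S, B s ∈ V) (k : ℕ) : FiniteIndex (KEquiv B EC k) S := by
  set D := {es : List Event | InEC EC es ∧ es.length ≤ k}
  have : Finite D := (List.finite_setOf_forall_mem_length_le hEC k).to_subtype
  refine finiteIndex_of_finite_image (fun s (es : D) => B (s.append es)) ?_ fun s t => ?_
  · refine (Set.Finite.pi (t := fun _ : D => V) fun _ => hV).subset ?_
    rintro _ ⟨s, hs, rfl⟩
    exact Set.mem_univ_pi.2 fun es => hBV _ (hS.append_mem hs es.2.1)
  · simp only [KEquiv, funext_iff, Subtype.forall, D, Set.mem_ofPred_eq, and_imp]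

theorem lastEvents_append_singleton (c : ℕ) (s : KState Rule Event) (E : Event) :
    lastEvents c (s.append [E]) = (lastEvents c s ++ [E]).rtake c := by
  change (s.events ++ [E]).rtake c = (s.events.rtake c ++ [E]).rtake c
  cases c <;> simp [List.rtake_eq_reverse_take_reverse, List.take_take]

theorem lastEvents_append_of_length_eq {c : ℕ} (s : KState Rule Event) {es : List Event}
    (h : es.length = c) : lastEvents c (s.append es) = es := by
  simp [lastEvents, KState.append, h]

theorem compOf_append_singleton (Pi : KState Rule Event → Event → Set Action)
    (rho : KState Rule Event → Set Action → List (Finset Rule)) (s : KState Rule Event)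
    (E : Event) : compOf Pi rho (s.append [E]) = rho s (Pi s E) := by
  simp [compOf, KState.append]

variable {Bel : List (Finset Rule) → Set Rule} {c : ℕ}
  {Pi : KState Rule Event → Event → Set Action}
  {rho : KState Rule Event → Set Action → List (Finset Rule)}

theorem CBounded.bel_compOf_append_eq (hb : CBounded c Pi rho fun s => Bel (compOf Pi rho s))
    {s t : KState Rule Event} (hbel : Bel (compOf Pi rho s) = Bel (compOf Pi rho t))
    (hlast : lastEvents c s = lastEvents c t) (es : List Event) :
    Bel (compOf Pi rho (s.append es)) = Bel (compOf Pi rho (t.append es)) := by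
  obtain ⟨f, g, hf, hg⟩ := hb
  induction es generalizing s t with
  | nil => simpa [KState.append_nil] using hbel
  | cons E es ih =>
    rw [KState.append_cons, KState.append_cons t]
    refine ih ?_ ?_
    · simp only [compOf_append_singleton, hf, hg, hbel, hlast]
    · simp only [lastEvents_append_singleton, hlast]

theorem CBounded.strongEquiv_of_kEquiv (hb : CBounded c Pi rho fun s => Bel (compOf Pi rho s))
    {EC : Set Event} {s t : KState Rule Event}
    (h : KEquiv (fun s => Bel (compOf Pi rho s)) EC c s t) :
    StrongEquiv (fun s => Bel (compOf Pi rho s)) EC s t := by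
  intro es hes
  rcases le_or_gt es.length c with hle | hlt
  · exact h es hes hle
  · have hlen : (es.take c).length = c := List.length_take_of_le hlt.le
    rw [← List.take_append_drop c es, KState.append_append, KState.append_append]
    refine hb.bel_compOf_append_eq ?_ ?_ _
    · exact h _ (fun E hE => hes E (List.mem_of_mem_take hE)) hlen.le
    · rw [lastEvents_append_of_length_eq s hlen, lastEvents_append_of_length_eq t hlen]

end Frame

theorem canonical_equiv_finiteIndex_general {Rule Event Action : Type} [DecidableEq Rule]
    (Bel : List (Finset Rule) → Set Rule) (EC : Set Event)
    (Pi : KState Rule Event → Event → Set Action)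
    (rho : KState Rule Event → Set Action → List (Finset Rule))
    (canon : List (Finset Rule) → List (Finset Rule))
    (hcanon : ∀ Ps : List (Finset Rule),
        Relation.ReflTransGen RedStep Ps (canon Ps) ∧ IrreducibleSeq (canon Ps))
    (S : Set (KState Rule Event)) (c : ℕ) (R0 : Finset Rule)
    (hc : Contracting Bel)
    (hb : CBounded c Pi rho (fun s => Bel (compOf Pi rho s)))
    (hEC : EC.Finite) (hS : SuccClosed EC S)
    (hR0 : ∀ s ∈ S, ∀ P ∈ compOf Pi rho s, P ⊆ R0) :
    FiniteIndex (StrongEquiv (fun s => Bel (canon (compOf Pi rho s))) EC) S := by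
  have hcanon_bel : (fun s => Bel (canon (compOf Pi rho s))) = fun s => Bel (compOf Pi rho s) :=
    funext fun s => hc.bel_eq_of_reflTransGen (hcanon _).1
  have hkequiv : FiniteIndex (KEquiv (fun s => Bel (compOf Pi rho s)) EC c) S :=
    finiteIndex_kEquiv hEC hS (hc.finite_image_bel canon hcanon R0)
      (fun s hs => ⟨_, hR0 s hs, rfl⟩) c
  rw [hcanon_bel]
  exact hkequiv.of_le (fun _ _ _ _ => rfl) (StrongEquiv.equivalence _ EC)
    fun _ _ => hb.strongEquiv_of_kEquiv

/-- For a contracting, `c`-bounded evolution frame with finite event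
    class, a successor-closed set `S` of knowledge states with finitely many distinct
    initial knowledge bases, and compilations built from rules of a fixed finite set
    `R0`, canonical equivalence (strong equivalence in the canonized frame) has finite
    index with respect to `S`. -/
theorem canonical_equiv_finiteIndex {Rule Event Action : Type} [DecidableEq Rule]
    (Bel : List (Finset Rule) → Set Rule) (EC : Set Event)
    (Pi : KState Rule Event → Event → Set Action)
    (rho : KState Rule Event → Set Action → List (Finset Rule))
    (canon : List (Finset Rule) → List (Finset Rule))
    (hcanon : ∀ Ps : List (Finset Rule),
        Relation.ReflTransGen RedStep Ps (canon Ps) ∧ IrreducibleSeq (canon Ps))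
    (S : Set (KState Rule Event)) (c : ℕ) (R0 : Finset Rule)
    (hc : Contracting Bel)
    (hb : CBounded c Pi rho (fun s => Bel (compOf Pi rho s)))
    (hEC : EC.Finite) (hS : SuccClosed EC S)
    (hkb : (KState.kb '' S).Finite)
    (hR0 : ∀ s ∈ S, ∀ P ∈ compOf Pi rho s, P ⊆ R0) :
    FiniteIndex (StrongEquiv (fun s => Bel (canon (compOf Pi rho s))) EC) S :=
  canonical_equiv_finiteIndex_general Bel EC Pi rho canon hcanon S c R0 hc hb hEC hS hR0
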